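/- arXiv:2403.15147 — 7 statements merged into one kernel-verified Lean document; each statement's English description precedes it below -/
import Mathlib

section
/- Let P₁, P₂, P₃ be elements of a complex Banach algebra and set 𝓛 = P₁ + P₂ + P₃. Then exp(tP₁)·exp(tP₂)·exp(tP₃) − exp(t𝓛) − t²·E₂ − t³·E₃ = O(t⁴) as t → 0, where E₂ = (1/2)([P₁,P₂] + [P₁,P₃] + [P₂,P₃]) and E₃ = (1/3)[P₁,[P₁,P₂]] + (1/6)[P₂,[P₁,P₂]] + (1/3)[P₁,[P₁,P₃]] + (1/6)[P₃,[P₁,P₃]] + (1/3)[P₂,[P₂,P₃]] + (1/6)[P₃,[P₂,P₃]] + (1/6)[P₁,[P₂,P₃]] − (1/6)[P₃,[P₁,P₂]] + (1/2)[P₁,P₂]·P₁ + (1/2)[P₁,P₂]·P₂ + (1/2)[P₁,P₃]·P₁ + (1/2)[P₁,P₃]·P₃ + (1/2)[P₂,P₃]·P₂ + (1/2)[P₂,P₃]·P₃ + (1/2)(P₁·P₂·P₃ − P₃·P₂·P₁). -/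
/-!
Each exponential `exp (t • X)` agrees with its cubic Taylor polynomial up to `O(t⁴)`, and
truncating power series commutes with multiplication (Cauchy product) up to an error of the order
of the truncation. Hence `exp(tP₁)exp(tP₂)exp(tP₃)` is, up to `O(t⁴)`, the cubic truncation of the
Cauchy product of three exponential series. Subtracting the cubic Taylor polynomial of `exp(t𝓛)`
leaves exactly `t²E₂ + t³E₃`, which is a noncommutative polynomial identity.
-/

open NormedSpace Asymptotics Filter
open scoped Topology

def ringComm {R : Type*} [Ring R] (X Y : R) : R := X * Y - Y * X

open Finset
open scoped Nat

section TruncatedSeries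

variable {𝕜 𝒜 : Type*} [NontriviallyNormedField 𝕜] [NormedRing 𝒜] [NormedAlgebra 𝕜 𝒜]

def truncatedSeries (a : ℕ → 𝒜) (N : ℕ) (t : 𝕜) : 𝒜 := ∑ k ∈ range N, t ^ k • a k

def cauchyProduct (a b : ℕ → 𝒜) (k : ℕ) : 𝒜 := ∑ p ∈ antidiagonal k, a p.1 * b p.2

theorem isBigO_pow_smul_const {N k : ℕ} (hNk : N ≤ k) (C : 𝒜) :
    (fun t : 𝕜 => t ^ k • C) =O[𝓝 0] (· ^ N) := by
  have hpow : (fun t : 𝕜 => t ^ k) =O[𝓝 0] (· ^ N) := by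
    rcases hNk.eq_or_lt with rfl | hlt
    · exact isBigO_refl _ _
    · exact (isLittleO_pow_pow hlt).isBigO
  simpa using hpow.smul (isBigO_const_one 𝕜 C (𝓝 0))

theorem truncatedSeries_isBigO_one (a : ℕ → 𝒜) (N : ℕ) :
    truncatedSeries (𝕜 := 𝕜) a N =O[𝓝 0] (fun _ => (1 : 𝕜)) := by
  have : Continuous (truncatedSeries (𝕜 := 𝕜) a N) := by unfold truncatedSeries; fun_prop
  exact (this.tendsto 0).isBigO_one 𝕜

theorem sum_range_sum_antidiagonal_eq_sum_filter {M : Type*} [AddCommMonoid M]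
    (F : ℕ × ℕ → M) (N : ℕ) :
    ∑ k ∈ range N, ∑ p ∈ antidiagonal k, F p
      = ∑ p ∈ range N ×ˢ range N with p.1 + p.2 < N, F p := by
  rw [← sum_fiberwise_of_maps_to (g := fun p : ℕ × ℕ => p.1 + p.2) (t := range N)]
  · refine sum_congr rfl fun k hk => sum_congr ?_ fun _ _ => rfl
    ext ⟨i, j⟩
    simp only [HasAntidiagonal.mem_antidiagonal, mem_filter, mem_product, mem_range] at hk ⊢
    omega
  · intro p hp
    simp only [mem_filter] at hp
    exact mem_range.2 hp.2

theorem truncatedSeries_mul (a b : ℕ → 𝒜) (N : ℕ) (t : 𝕜) :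
    truncatedSeries a N t * truncatedSeries b N t
      = truncatedSeries (cauchyProduct a b) N t
        + ∑ p ∈ range N ×ˢ range N with N ≤ p.1 + p.2, t ^ (p.1 + p.2) • (a p.1 * b p.2) := by
  have hlow : truncatedSeries (cauchyProduct a b) N t
      = ∑ p ∈ range N ×ˢ range N with p.1 + p.2 < N, t ^ (p.1 + p.2) • (a p.1 * b p.2) := by
    rw [← sum_range_sum_antidiagonal_eq_sum_filter]
    refine sum_congr rfl fun k _ => ?_
    rw [cauchyProduct, smul_sum]
    refine sum_congr rfl fun p hp => ?_
    rw [HasAntidiagonal.mem_antidiagonal.1 hp]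
  simp_rw [hlow, not_lt.symm, sum_filter_add_sum_filter_not, truncatedSeries, sum_mul_sum,
    sum_product, smul_mul_smul_comm, pow_add]

theorem isBigO_mul_sub_truncatedSeries_cauchyProduct {f g : 𝕜 → 𝒜} {a b : ℕ → 𝒜} {N : ℕ}
    (hf : (fun t => f t - truncatedSeries a N t) =O[𝓝 0] (· ^ N))
    (hg : (fun t => g t - truncatedSeries b N t) =O[𝓝 0] (· ^ N)) :
    (fun t => f t * g t - truncatedSeries (cauchyProduct a b) N t) =O[𝓝 0] (· ^ N) := by
  have hpow : (fun t : 𝕜 => t ^ N) =O[𝓝 0] (fun _ => (1 : 𝕜)) :=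
    ((continuous_pow N).tendsto 0).isBigO_one 𝕜
  have hg_bdd : g =O[𝓝 0] (fun _ => (1 : 𝕜)) := by
    simpa using (hg.trans hpow).add (truncatedSeries_isBigO_one b N)
  have htail : (fun t : 𝕜 => ∑ p ∈ range N ×ˢ range N with N ≤ p.1 + p.2,
      t ^ (p.1 + p.2) • (a p.1 * b p.2)) =O[𝓝 0] (· ^ N) :=
    IsBigO.fun_sum fun p hp => isBigO_pow_smul_const (mem_filter.1 hp).2 _
  have hsplit : ∀ t, f t * g t - truncatedSeries (cauchyProduct a b) N t
      = (f t - truncatedSeries a N t) * g t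
        + truncatedSeries a N t * (g t - truncatedSeries b N t)
        + ∑ p ∈ range N ×ˢ range N with N ≤ p.1 + p.2, t ^ (p.1 + p.2) • (a p.1 * b p.2) := by
    intro t
    rw [← sub_eq_iff_eq_add'.2 (truncatedSeries_mul a b N t)]
    noncomm_ring
  have hleft : (fun t => (f t - truncatedSeries a N t) * g t) =O[𝓝 0] (· ^ N) := by
    simpa using hf.mul hg_bdd
  have hright : (fun t => truncatedSeries a N t * (g t - truncatedSeries b N t))
      =O[𝓝 0] (· ^ N) := by
    simpa using (truncatedSeries_isBigO_one a N).mul hg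
  simpa only [hsplit] using (hleft.add hright).add htail

end TruncatedSeries

section Exp

variable {𝕜 𝒜 : Type*} [NontriviallyNormedField 𝕜] [CharZero 𝕜] [ContinuousSMul ℚ 𝕜]
  [NormedRing 𝒜] [NormedAlgebra 𝕜 𝒜] [CompleteSpace 𝒜]

theorem exp_smul_sub_truncatedSeries_isBigO (X : 𝒜) (N : ℕ) :
    (fun t : 𝕜 => exp (t • X) - truncatedSeries (fun k => (k ! : 𝕜)⁻¹ • X ^ k) N t)
      =O[𝓝 0] (· ^ N) := by
  set L := ContinuousLinearMap.toSpanSingleton 𝕜 X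
  have hL : Tendsto L (𝓝 0) (𝓝 0) := L.continuous.tendsto' 0 0 (by simp)
  have hexp := (exp_hasFPowerSeriesAt_zero (𝕂 := 𝕜) (𝔸 := 𝒜)).isBigO_sub_partialSum_pow N
    |>.comp_tendsto hL
  have hnorm : (fun t : 𝕜 => ‖L t‖ ^ N) =O[𝓝 0] (· ^ N) := (L.isBigO_id _).norm_left.pow N
  refine (hexp.trans hnorm).congr_left fun t => ?_
  simp only [Function.comp_apply, zero_add, FormalMultilinearSeries.partialSum, expSeries_apply_eq,
    truncatedSeries, L, ContinuousLinearMap.toSpanSingleton_apply, smul_pow]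
  exact congrArg _ (sum_congr rfl fun k _ => smul_comm _ _ _)

end Exp

/-- For `P₁, P₂, P₃` in a complex Banach algebra with `𝓛 = P₁ + P₂ + P₃`,
`exp(tP₁)exp(tP₂)exp(tP₃) − exp(t𝓛) − t²E₂ − t³E₃ = O(t⁴)` as `t → 0`, with `E₂, E₃`
as given in the paper. -/
theorem splitting_three_E3 {𝒜 : Type*} [NormedRing 𝒜] [NormedAlgebra ℂ 𝒜]
    [CompleteSpace 𝒜] (P₁ P₂ P₃ : 𝒜) (𝓛 : 𝒜) (h𝓛 : 𝓛 = P₁ + P₂ + P₃)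
    (E₂ E₃ : 𝒜)
    (hE₂ : E₂ = (1 / 2 : ℂ) • (ringComm P₁ P₂ + ringComm P₁ P₃ + ringComm P₂ P₃))
    (hE₃ : E₃ =
        (1 / 3 : ℂ) • ringComm P₁ (ringComm P₁ P₂)
      + (1 / 6 : ℂ) • ringComm P₂ (ringComm P₁ P₂)
      + (1 / 3 : ℂ) • ringComm P₁ (ringComm P₁ P₃)
      + (1 / 6 : ℂ) • ringComm P₃ (ringComm P₁ P₃)
      + (1 / 3 : ℂ) • ringComm P₂ (ringComm P₂ P₃)
      + (1 / 6 : ℂ) • ringComm P₃ (ringComm P₂ P₃)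
      + (1 / 6 : ℂ) • ringComm P₁ (ringComm P₂ P₃)
      - (1 / 6 : ℂ) • ringComm P₃ (ringComm P₁ P₂)
      + (1 / 2 : ℂ) • (ringComm P₁ P₂ * P₁)
      + (1 / 2 : ℂ) • (ringComm P₁ P₂ * P₂)
      + (1 / 2 : ℂ) • (ringComm P₁ P₃ * P₁)
      + (1 / 2 : ℂ) • (ringComm P₁ P₃ * P₃)
      + (1 / 2 : ℂ) • (ringComm P₂ P₃ * P₂)
      + (1 / 2 : ℂ) • (ringComm P₂ P₃ * P₃)
      + (1 / 2 : ℂ) • (P₁ * P₂ * P₃ - P₃ * P₂ * P₁)) :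
    (fun t : ℝ => exp ((t : ℂ) • P₁) * exp ((t : ℂ) • P₂) * exp ((t : ℂ) • P₃)
        - exp ((t : ℂ) • 𝓛) - ((t : ℂ) ^ 2) • E₂ - ((t : ℂ) ^ 3) • E₃)
      =O[𝓝 (0 : ℝ)] fun t : ℝ => t ^ 4 := by
  subst h𝓛 hE₂ hE₃
  have hexp (X : 𝒜) := exp_smul_sub_truncatedSeries_isBigO (𝕜 := ℝ) X 4
  have hprod := isBigO_mul_sub_truncatedSeries_cauchyProduct
    (isBigO_mul_sub_truncatedSeries_cauchyProduct (hexp P₁) (hexp P₂)) (hexp P₃)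
  refine (hprod.sub (hexp (P₁ + P₂ + P₃))).congr_left fun t => ?_
  simp only [Complex.coe_smul, ← Complex.ofReal_pow]
  simp only [truncatedSeries, cauchyProduct, sum_range_succ, sum_range_zero,
    Finset.Nat.sum_antidiagonal_succ, Finset.Nat.antidiagonal_zero, sum_singleton, Nat.factorial,
    ringComm]
  simp only [mul_add, add_mul, mul_sub, sub_mul, smul_mul_assoc, mul_smul_comm, smul_smul, smul_add,
    smul_sub, pow_succ, pow_zero, one_mul, mul_one, mul_assoc]
  match_scalars <;> ring
end

section
/- Let P₁, P₂, P₃ be elements of an associative ℚ-algebra (an associative, not necessarily commutative ring over a field of characteristic zero) satisfying the second-order condition [P₁,P₂] + [P₁,P₃] + [P₂,P₃] = 0. Then (1/3)[P₁,[P₁,P₂]] + (1/6)[P₂,[P₁,P₂]] + (1/3)[P₁,[P₁,P₃]] + (1/6)[P₃,[P₁,P₃]] + (1/3)[P₂,[P₂,P₃]] + (1/6)[P₃,[P₂,P₃]] + (1/6)[P₁,[P₂,P₃]] − (1/6)[P₃,[P₁,P₂]] + (1/2)[P₁,P₂]·P₁ + (1/2)[P₁,P₂]·P₂ + (1/2)[P₁,P₃]·P₁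 + (1/2)[P₁,P₃]·P₃ + (1/2)[P₂,P₃]·P₂ + (1/2)[P₂,P₃]·P₃ + (1/2)(P₁·P₂·P₃ − P₃·P₂·P₁) = −(1/6)[P₂,[P₁,P₂]] − (1/6)[P₃,[P₁,P₂]]. -/
/-- In an associative ℚ-algebra, if `[P₁,P₂] + [P₁,P₃] + [P₂,P₃] = 0`, then the
`E₃` expression obtained from the Taylor expansion simplifies to
`−(1/6)[P₂,[P₁,P₂]] − (1/6)[P₃,[P₁,P₂]]`. -/
theorem E3_simplification {R : Type*} [Ring R] [Algebra ℚ R] (P₁ P₂ P₃ : R)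
    (hcond : ringComm P₁ P₂ + ringComm P₁ P₃ + ringComm P₂ P₃ = 0) :
      (1 / 3 : ℚ) • ringComm P₁ (ringComm P₁ P₂)
    + (1 / 6 : ℚ) • ringComm P₂ (ringComm P₁ P₂)
    + (1 / 3 : ℚ) • ringComm P₁ (ringComm P₁ P₃)
    + (1 / 6 : ℚ) • ringComm P₃ (ringComm P₁ P₃)
    + (1 / 3 : ℚ) • ringComm P₂ (ringComm P₂ P₃)
    + (1 / 6 : ℚ) • ringComm P₃ (ringComm P₂ P₃)
    + (1 / 6 : ℚ) • ringComm P₁ (ringComm P₂ P₃)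
    - (1 / 6 : ℚ) • ringComm P₃ (ringComm P₁ P₂)
    + (1 / 2 : ℚ) • (ringComm P₁ P₂ * P₁)
    + (1 / 2 : ℚ) • (ringComm P₁ P₂ * P₂)
    + (1 / 2 : ℚ) • (ringComm P₁ P₃ * P₁)
    + (1 / 2 : ℚ) • (ringComm P₁ P₃ * P₃)
    + (1 / 2 : ℚ) • (ringComm P₂ P₃ * P₂)
    + (1 / 2 : ℚ) • (ringComm P₂ P₃ * P₃)
    + (1 / 2 : ℚ) • (P₁ * P₂ * P₃ - P₃ * P₂ * P₁)
    = - (1 / 6 : ℚ) • ringComm P₂ (ringComm P₁ P₂)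
      - (1 / 6 : ℚ) • ringComm P₃ (ringComm P₁ P₂) := by
  have key :
      (1 / 3 : ℚ) • ringComm P₁ (ringComm P₁ P₂)
    + (1 / 6 : ℚ) • ringComm P₂ (ringComm P₁ P₂)
    + (1 / 3 : ℚ) • ringComm P₁ (ringComm P₁ P₃)
    + (1 / 6 : ℚ) • ringComm P₃ (ringComm P₁ P₃)
    + (1 / 3 : ℚ) • ringComm P₂ (ringComm P₂ P₃)
    + (1 / 6 : ℚ) • ringComm P₃ (ringComm P₂ P₃)
    + (1 / 6 : ℚ) • ringComm P₁ (ringComm P₂ P₃)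
    - (1 / 6 : ℚ) • ringComm P₃ (ringComm P₁ P₂)
    + (1 / 2 : ℚ) • (ringComm P₁ P₂ * P₁)
    + (1 / 2 : ℚ) • (ringComm P₁ P₂ * P₂)
    + (1 / 2 : ℚ) • (ringComm P₁ P₃ * P₁)
    + (1 / 2 : ℚ) • (ringComm P₁ P₃ * P₃)
    + (1 / 2 : ℚ) • (ringComm P₂ P₃ * P₂)
    + (1 / 2 : ℚ) • (ringComm P₂ P₃ * P₃)
    + (1 / 2 : ℚ) • (P₁ * P₂ * P₃ - P₃ * P₂ * P₁)
    = - (1 / 6 : ℚ) • ringComm P₂ (ringComm P₁ P₂)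
      - (1 / 6 : ℚ) • ringComm P₃ (ringComm P₁ P₂)
      + (1 / 6 : ℚ) • ((ringComm P₁ P₂ + ringComm P₁ P₃ + ringComm P₂ P₃) * P₁)
      + (1 / 6 : ℚ) • ((ringComm P₁ P₂ + ringComm P₁ P₃ + ringComm P₂ P₃) * P₂)
      + (1 / 3 : ℚ) • ((ringComm P₁ P₂ + ringComm P₁ P₃ + ringComm P₂ P₃) * P₃)
      + (1 / 3 : ℚ) • (P₁ * (ringComm P₁ P₂ + ringComm P₁ P₃ + ringComm P₂ P₃))
      + (1 / 3 : ℚ) • (P₂ * (ringComm P₁ P₂ + ringComm P₁ P₃ + ringComm P₂ P₃))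
      + (1 / 6 : ℚ) • (P₃ * (ringComm P₁ P₂ + ringComm P₁ P₃ + ringComm P₂ P₃)) := by
    simp only [ringComm, mul_add, add_mul, mul_sub, sub_mul, mul_assoc]
    module
  rw [key, hcond]
  simp
end

section
/- Let P₁, P₂, P₃ be elements of a complex Banach algebra with 𝓛 = P₁ + P₂ + P₃, and suppose the second-order condition [P₁,P₂] + [P₁,P₃] + [P₂,P₃] = 0 holds. Then exp(tP₁)·exp(tP₂)·exp(tP₃) − exp(t𝓛) − (t³/6)·([P₁,[P₂,P₃]] + [P₂,[P₂,P₃]]) = O(t⁴) as t → 0. -/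
/-!
Each `exp (s • Pᵢ)` agrees with its cubic Taylor polynomial up to `O(s⁴)`, hence so does the
product of the three exponentials with the product of the three Taylor polynomials. That product
is a polynomial in `s` with coefficients in `𝒜`. Its coefficients of degree `≤ 3` are those of the
Taylor polynomial of `exp (s • 𝓛)` plus `(s³/6) C`, `C = [P₁,[P₂,P₃]] + [P₂,[P₂,P₃]]`: in degree 2
the defect is the commutator sum `D`, and in degree 3 it is a sum of terms `Pᵢ D` and `D Pᵢ`.
A polynomial whose coefficients below degree 4 vanish is divisible by `X ^ 4`, hence `O(s⁴)`.
-/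

open NormedSpace Asymptotics Filter
open scoped Topology

open Polynomial Finset
open scoped Nat

section Ring

variable {R : Type*} [Ring R] {P₁ P₂ P₃ : R}

theorem add_add_sq_of_sum_ringComm_eq_zero
    (h : ringComm P₁ P₂ + ringComm P₁ P₃ + ringComm P₂ P₃ = 0) :
    (P₁ + P₂ + P₃) ^ 2 = P₁ ^ 2 + P₂ ^ 2 + P₃ ^ 2 + 2 • (P₁ * P₂ + P₁ * P₃ + P₂ * P₃) := by
  rw [← sub_eq_zero, ← neg_eq_zero, ← h]
  simp only [ringComm]
  noncomm_ring

theorem add_add_pow_three_of_sum_ringComm_eq_zero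
    (h : ringComm P₁ P₂ + ringComm P₁ P₃ + ringComm P₂ P₃ = 0) :
    (P₁ + P₂ + P₃) ^ 3 + (ringComm P₁ (ringComm P₂ P₃) + ringComm P₂ (ringComm P₂ P₃)) =
      P₁ ^ 3 + P₂ ^ 3 + P₃ ^ 3
        + 3 • (P₁ ^ 2 * P₂ + P₁ ^ 2 * P₃ + P₂ ^ 2 * P₃ + P₁ * P₂ ^ 2 + P₁ * P₃ ^ 2 + P₂ * P₃ ^ 2)
        + 6 • (P₁ * P₂ * P₃) := by
  set D := ringComm P₁ P₂ + ringComm P₁ P₃ + ringComm P₂ P₃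
  have defect : (P₁ + P₂ + P₃) ^ 3 + (ringComm P₁ (ringComm P₂ P₃) + ringComm P₂ (ringComm P₂ P₃))
      - (P₁ ^ 3 + P₂ ^ 3 + P₃ ^ 3
        + 3 • (P₁ ^ 2 * P₂ + P₁ ^ 2 * P₃ + P₂ ^ 2 * P₃ + P₁ * P₂ ^ 2 + P₁ * P₃ ^ 2 + P₂ * P₃ ^ 2)
        + 6 • (P₁ * P₂ * P₃))
      = -(2 * P₁ * D + P₂ * D + P₃ * D + D * P₁ + 2 * D * P₂ + 2 * D * P₃) := by
    simp only [D, ringComm]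
    noncomm_ring
  rw [h] at defect
  simpa [sub_eq_zero] using defect

end Ring

section Taylor

variable {𝕂 𝒜 : Type*} [Field 𝕂] [Ring 𝒜] [Algebra 𝕂 𝒜]

variable (𝕂) in
/-- The Taylor polynomial of degree `< n` of `s ↦ exp (s • A)`, as a polynomial in `s` with
coefficients in `𝒜`; it is evaluated at `algebraMap 𝕂 𝒜 s`. -/
noncomputable def expTaylor (n : ℕ) (A : 𝒜) : 𝒜[X] :=
  ∑ k ∈ range n, monomial k ((k ! : 𝕂)⁻¹ • A ^ k)

theorem coeff_expTaylor (n : ℕ) (A : 𝒜) (k : ℕ) :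
    (expTaylor 𝕂 n A).coeff k = if k < n then (k ! : 𝕂)⁻¹ • A ^ k else 0 := by
  simp [expTaylor, coeff_monomial]

theorem coeff_expTaylor_mul_mul_sub_eq_zero [CharZero 𝕂] {P₁ P₂ P₃ : 𝒜}
    (h : ringComm P₁ P₂ + ringComm P₁ P₃ + ringComm P₂ P₃ = 0) :
    ∀ d < 4, (expTaylor 𝕂 4 P₁ * expTaylor 𝕂 4 P₂ * expTaylor 𝕂 4 P₃
      - expTaylor 𝕂 4 (P₁ + P₂ + P₃)
      - monomial 3 ((6 : 𝕂)⁻¹ • (ringComm P₁ (ringComm P₂ P₃) + ringComm P₂ (ringComm P₂ P₃)))).coeff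
        d = 0 := by
  intro d hd
  have h2 := add_add_sq_of_sum_ringComm_eq_zero h
  have h3 := eq_sub_of_add_eq (add_add_pow_three_of_sum_ringComm_eq_zero h)
  -- `-nsmul_eq_mul` keeps `2 •`, `3 •`, `6 •` as scalar actions, which `module` can read
  interval_cases d <;>
    simp [coeff_mul, Nat.sum_antidiagonal_succ, coeff_expTaylor, coeff_monomial, h2, h3,
      Nat.factorial, ringComm, mul_add, add_mul, mul_sub, sub_mul, smul_sub, mul_assoc, pow_succ,
      -nsmul_eq_mul] <;>
    module

end Taylor

theorem Polynomial.eval_algebraMap_mul {𝕂 𝒜 : Type*} [CommSemiring 𝕂] [Semiring 𝒜]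
    [Algebra 𝕂 𝒜] (p q : 𝒜[X]) (s : 𝕂) :
    (p * q).eval (algebraMap 𝕂 𝒜 s) = p.eval (algebraMap 𝕂 𝒜 s) * q.eval (algebraMap 𝕂 𝒜 s) :=
  eval₂_mul_noncomm _ _ fun _ => Algebra.commute_algebraMap_right _ _

theorem Polynomial.eval_algebraMap_monomial {𝕂 𝒜 : Type*} [CommSemiring 𝕂] [Semiring 𝒜]
    [Algebra 𝕂 𝒜] (n : ℕ) (a : 𝒜) (s : 𝕂) :
    (monomial n a).eval (algebraMap 𝕂 𝒜 s) = s ^ n • a := by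
  rw [eval_monomial, ← map_pow, ← Algebra.commutes, ← Algebra.smul_def]

theorem Asymptotics.IsBigO.mul_sub_mul {α R S : Type*} [SeminormedRing R] [NormedRing S]
    [NormMulClass S] {l : Filter α} {f₁ f₂ g₁ g₂ : α → R} {g : α → S}
    (h₁ : (fun x => f₁ x - g₁ x) =O[l] g) (h₂ : (fun x => f₂ x - g₂ x) =O[l] g)
    (hf₂ : f₂ =O[l] fun _ => (1 : S)) (hg₁ : g₁ =O[l] fun _ => (1 : S)) :
    (fun x => f₁ x * f₂ x - g₁ x * g₂ x) =O[l] g := by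
  have h₁' : (fun x => (f₁ x - g₁ x) * f₂ x) =O[l] g := by simpa using h₁.mul hf₂
  have h₂' : (fun x => g₁ x * (f₂ x - g₂ x)) =O[l] g := by simpa using hg₁.mul h₂
  refine (h₁'.add h₂').congr_left fun x => ?_
  noncomm_ring

theorem Polynomial.isBigO_eval_algebraMap_of_coeff_eq_zero {𝕂 𝒜 : Type*}
    [NontriviallyNormedField 𝕂] [NormedRing 𝒜] [NormedAlgebra 𝕂 𝒜] {p : 𝒜[X]} {n : ℕ}
    (h : ∀ d < n, p.coeff d = 0) :
    (fun s : 𝕂 => p.eval (algebraMap 𝕂 𝒜 s)) =O[𝓝 0] (· ^ n) := by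
  obtain ⟨q, rfl⟩ := X_pow_dvd_iff.2 h
  have hq : (fun s : 𝕂 => q.eval (algebraMap 𝕂 𝒜 s)) =O[𝓝 0] fun _ => (1 : 𝕂) :=
    ((q.continuous.comp (continuous_algebraMap 𝕂 𝒜)).tendsto 0).isBigO_one 𝕂
  refine ((isBigO_refl (fun s : 𝕂 => s ^ n) (𝓝 0)).smul hq).congr (fun s => ?_) fun _ => mul_one _
  rw [eval_algebraMap_mul, X_pow_eq_monomial, eval_algebraMap_monomial, smul_mul_assoc, one_mul]

section Analysis

variable {𝕂 𝒜 : Type*} [RCLike 𝕂] [NormedRing 𝒜] [NormedAlgebra 𝕂 𝒜] [CompleteSpace 𝒜]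

theorem exp_smul_sub_eval_expTaylor_isBigO (A : 𝒜) (n : ℕ) :
    (fun s : 𝕂 => exp (s • A) - (expTaylor 𝕂 n A).eval (algebraMap 𝕂 𝒜 s)) =O[𝓝 0] (· ^ n) := by
  have hA : Tendsto (fun s : 𝕂 => s • A) (𝓝 0) (𝓝 0) :=
    (continuous_id.smul continuous_const).tendsto' 0 0 (zero_smul 𝕂 A)
  have hTaylor := ((exp_hasFPowerSeriesAt_zero (𝕂 := 𝕂) (𝔸 := 𝒜)).isBigO_sub_partialSum_pow
    n).comp_tendsto hA
  have hnorm : (fun s : 𝕂 => ‖s • A‖ ^ n) =O[𝓝 0] (· ^ n) := by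
    refine .of_bound (‖A‖ ^ n) (Eventually.of_forall fun s => ?_)
    simp [norm_smul, mul_pow, mul_comm]
  refine (hTaylor.trans hnorm).congr_left fun s => ?_
  simp only [Function.comp_apply, zero_add, FormalMultilinearSeries.partialSum, expSeries_apply_eq,
    expTaylor, eval_finsetSum, eval_algebraMap_monomial, _root_.smul_pow, smul_smul, mul_comm]

theorem exp_smul_mul_exp_smul_mul_exp_smul_sub_isBigO (P₁ P₂ P₃ : 𝒜)
    (h : ringComm P₁ P₂ + ringComm P₁ P₃ + ringComm P₂ P₃ = 0) :
    (fun s : 𝕂 => exp (s • P₁) * exp (s • P₂) * exp (s • P₃) - exp (s • (P₁ + P₂ + P₃))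
      - (s ^ 3 / 6) • (ringComm P₁ (ringComm P₂ P₃) + ringComm P₂ (ringComm P₂ P₃)))
      =O[𝓝 0] (· ^ 4) := by
  set E : 𝒜 → 𝕂 → 𝒜 := fun A s => (expTaylor 𝕂 4 A).eval (algebraMap 𝕂 𝒜 s)
  have hexp_bdd (A : 𝒜) : (fun s : 𝕂 => exp (s • A)) =O[𝓝 0] fun _ => (1 : 𝕂) :=
    ((exp_analytic (𝕂 := 𝕂) (0 : 𝒜)).continuousAt.tendsto.comp
      ((continuous_id.smul continuous_const).tendsto' 0 0 (zero_smul 𝕂 A))).isBigO_one 𝕂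
  have hE_bdd (A : 𝒜) : E A =O[𝓝 0] fun _ => (1 : 𝕂) :=
    (((expTaylor 𝕂 4 A).continuous.comp (continuous_algebraMap 𝕂 𝒜)).tendsto 0).isBigO_one 𝕂
  have hprod := ((exp_smul_sub_eval_expTaylor_isBigO P₁ 4).mul_sub_mul
    (exp_smul_sub_eval_expTaylor_isBigO P₂ 4) (hexp_bdd P₂) (hE_bdd P₁)).mul_sub_mul
    (exp_smul_sub_eval_expTaylor_isBigO P₃ 4) (hexp_bdd P₃)
    (by simpa using (hE_bdd P₁).mul (hE_bdd P₂))
  have hpoly := isBigO_eval_algebraMap_of_coeff_eq_zero (𝕂 := 𝕂)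
    (coeff_expTaylor_mul_mul_sub_eq_zero (𝕂 := 𝕂) h)
  refine ((hprod.sub (exp_smul_sub_eval_expTaylor_isBigO (P₁ + P₂ + P₃) 4)).add
    hpoly).congr_left fun s => ?_
  simp only [E, eval_sub, eval_algebraMap_mul, eval_algebraMap_monomial, smul_smul,
    div_eq_mul_inv]
  abel

end Analysis

/-- For `P₁, P₂, P₃` in a complex Banach algebra with `𝓛 = P₁ + P₂ + P₃` and
`[P₁,P₂] + [P₁,P₃] + [P₂,P₃] = 0`, one has
`exp(tP₁)exp(tP₂)exp(tP₃) − exp(t𝓛) − (t³/6)([P₁,[P₂,P₃]] + [P₂,[P₂,P₃]]) = O(t⁴)`. -/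
theorem splitting_three_leading_error {𝒜 : Type*} [NormedRing 𝒜] [NormedAlgebra ℂ 𝒜]
    [CompleteSpace 𝒜] (P₁ P₂ P₃ : 𝒜) (𝓛 : 𝒜) (h𝓛 : 𝓛 = P₁ + P₂ + P₃)
    (hcond : ringComm P₁ P₂ + ringComm P₁ P₃ + ringComm P₂ P₃ = 0) :
    (fun t : ℝ => exp ((t : ℂ) • P₁) * exp ((t : ℂ) • P₂) * exp ((t : ℂ) • P₃)
        - exp ((t : ℂ) • 𝓛)
        - ((t : ℂ) ^ 3 / 6) • (ringComm P₁ (ringComm P₂ P₃) + ringComm P₂ (ringComm P₂ P₃)))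
      =O[𝓝 (0 : ℝ)] fun t : ℝ => t ^ 4 := by
  subst h𝓛
  have hofReal : Tendsto (fun t : ℝ => (t : ℂ)) (𝓝 0) (𝓝 0) := by
    simpa using Complex.continuous_ofReal.tendsto 0
  refine ((exp_smul_mul_exp_smul_mul_exp_smul_sub_isBigO P₁ P₂ P₃ hcond).comp_tendsto
    hofReal).trans ?_
  exact .of_bound' (Eventually.of_forall fun t => by simp)
end

section
/- Let P₁, P₂, P₃ be elements of a complex Banach algebra, set 𝓛 = P₁ + P₂ + P₃, S(t) = exp(tP₁)·exp(tP₂)·exp(tP₃) and E(t) = S(t) − exp(t𝓛). Then for every real t ≥ 0, E(t) = ∫₀ᵗ exp((t−τ)𝓛)·[exp(τP₁), P₂]·exp(τP₂)·exp(τP₃) dτ + ∫₀ᵗ exp((t−τ)𝓛)·[exp(τP₁)·exp(τP₂), P₃]·exp(τP₃) dτ. -/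
/-!
Writing `S τ = exp (τ P₁) exp (τ P₂) exp (τ P₃)`, the product rule gives `S' = 𝓛 S + D`, where
`D` consists of the two commutator terms that appear when `P₂` and `P₃` are moved to the left.
Differentiating `τ ↦ exp ((t - τ) 𝓛) S τ` (the `𝓛 S` contributions cancel because `𝓛` commutes
with its own exponential) and integrating over `[0, t]` yields the formula.
-/

open NormedSpace

section Duhamel

variable {𝔸 : Type*} [NormedRing 𝔸] [NormedAlgebra ℝ 𝔸] [CompleteSpace 𝔸]

@[fun_prop]
lemma Continuous.exp_smul_const {α : Type*} [TopologicalSpace α] {f : α → ℝ} (hf : Continuous f)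
    (P : 𝔸) : Continuous fun x => exp (f x • P) :=
  (differentiable_exp_smul_const ℝ P).continuous.comp hf

lemma hasDerivAt_exp_sub_smul_const (L : 𝔸) (t τ : ℝ) :
    HasDerivAt (fun u : ℝ => exp ((t - u) • L)) (-(L * exp ((t - τ) • L))) τ := by
  simpa [Function.comp_def] using
    (hasDerivAt_exp_smul_const' L (t - τ)).scomp τ ((hasDerivAt_id τ).const_sub t)

/-- Duhamel's formula (variation of constants) for `S' = L S + D`. -/
theorem sub_exp_smul_mul_eq_integral {S D : ℝ → 𝔸} (L : 𝔸)
    (hS : ∀ τ, HasDerivAt S (L * S τ + D τ) τ) (hD : Continuous D) (t : ℝ) :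
    S t - exp (t • L) * S 0 = ∫ τ in (0 : ℝ)..t, exp ((t - τ) • L) * D τ := by
  have hderiv : ∀ τ, HasDerivAt (fun u => exp ((t - u) • L) * S u)
      (exp ((t - τ) • L) * D τ) τ := by
    intro τ
    have hcomm : L * exp ((t - τ) • L) = exp ((t - τ) • L) * L :=
      ((Commute.refl L).smul_right (t - τ)).exp_right.eq
    refine ((hasDerivAt_exp_sub_smul_const L t τ).mul (hS τ)).congr_deriv ?_
    rw [hcomm]
    noncomm_ring
  have hcont : Continuous fun τ => exp ((t - τ) • L) * D τ := by fun_prop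
  rw [intervalIntegral.integral_eq_sub_of_hasDerivAt (fun τ _ => hderiv τ)
    (hcont.intervalIntegrable 0 t)]
  simp

lemma hasDerivAt_exp_smul_mul_exp_smul_mul_exp_smul (P₁ P₂ P₃ : 𝔸) (τ : ℝ) :
    HasDerivAt (fun u : ℝ => exp (u • P₁) * exp (u • P₂) * exp (u • P₃))
      ((P₁ + P₂ + P₃) * (exp (τ • P₁) * exp (τ • P₂) * exp (τ • P₃))
        + ((exp (τ • P₁) * P₂ - P₂ * exp (τ • P₁)) * exp (τ • P₂) * exp (τ • P₃)
          + (exp (τ • P₁) * exp (τ • P₂) * P₃ - P₃ * (exp (τ • P₁) * exp (τ • P₂)))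
            * exp (τ • P₃))) τ := by
  refine (((hasDerivAt_exp_smul_const' P₁ τ).mul (hasDerivAt_exp_smul_const' P₂ τ)).mul
    (hasDerivAt_exp_smul_const' P₃ τ)).congr_deriv ?_
  simp only [Pi.mul_apply]
  noncomm_ring

end Duhamel

/-- For `P₁, P₂, P₃` in a complex Banach algebra, `𝓛 = P₁ + P₂ + P₃`,
`S(t) = exp(tP₁)exp(tP₂)exp(tP₃)` and `E(t) = S(t) − exp(t𝓛)`, for all `t ≥ 0`:
`E(t) = ∫₀ᵗ exp((t−τ)𝓛)[exp(τP₁),P₂]exp(τP₂)exp(τP₃) dτ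
      + ∫₀ᵗ exp((t−τ)𝓛)[exp(τP₁)exp(τP₂),P₃]exp(τP₃) dτ`. -/
theorem E_duhamel {𝒜 : Type*} [NormedRing 𝒜] [NormedAlgebra ℂ 𝒜] [CompleteSpace 𝒜]
    (P₁ P₂ P₃ : 𝒜) (𝓛 : 𝒜) (h𝓛 : 𝓛 = P₁ + P₂ + P₃) :
    ∀ t : ℝ, 0 ≤ t →
      exp ((t : ℂ) • P₁) * exp ((t : ℂ) • P₂) * exp ((t : ℂ) • P₃) - exp ((t : ℂ) • 𝓛)
        = (∫ τ in (0 : ℝ)..t, exp (((t - τ : ℝ) : ℂ) • 𝓛)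
              * (exp ((τ : ℂ) • P₁) * P₂ - P₂ * exp ((τ : ℂ) • P₁))
              * exp ((τ : ℂ) • P₂) * exp ((τ : ℂ) • P₃))
          + ∫ τ in (0 : ℝ)..t, exp (((t - τ : ℝ) : ℂ) • 𝓛)
              * (exp ((τ : ℂ) • P₁) * exp ((τ : ℂ) • P₂) * P₃
                  - P₃ * (exp ((τ : ℂ) • P₁) * exp ((τ : ℂ) • P₂)))
              * exp ((τ : ℂ) • P₃) := by
  intro t _
  simp only [Complex.coe_smul]
  subst h𝓛
  have hduhamel := sub_exp_smul_mul_eq_integral (P₁ + P₂ + P₃)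
    (hasDerivAt_exp_smul_mul_exp_smul_mul_exp_smul P₁ P₂ P₃) (by fun_prop) t
  simp only [zero_smul, exp_zero, mul_one] at hduhamel
  rw [hduhamel, ← intervalIntegral.integral_add
    ((by fun_prop : Continuous _).intervalIntegrable 0 t)
    ((by fun_prop : Continuous _).intervalIntegrable 0 t)]
  congr with τ
  noncomm_ring
end

section
/- Let P₁, P₂, P₃ be elements of a complex Banach algebra satisfying [P₁,P₂] + [P₁,P₃] + [P₂,P₃] = 0, set 𝓛 = P₁ + P₂ + P₃, S(t) = exp(tP₁)·exp(tP₂)·exp(tP₃), E(t) = S(t) − exp(t𝓛), and define W(τ) = exp(τP₁)·∫₀^τ exp(ηP₂)·[P₂,P₃]·exp(−ηP₂) dη − (∫₀^τ exp(ηP₁)·[P₂,P₃]·exp(−ηP₁) dη)·exp(τP₁). Then for every real t ≥ 0, E(t) = ∫₀ᵗ exp((t−τ)𝓛)·W(τ)·exp(τP₂)·exp(τP₃) dτ. -/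
/-!
For any differentiable `S` with `S 0 = 1`, variation of constants gives
`S t - exp (t𝓛) = ∫₀ᵗ exp ((t - τ)𝓛) (S' τ - 𝓛 S τ) dτ`; apply it to
`S τ = exp (τP₁) exp (τP₂) exp (τP₃)`. Each conjugation integral in `W` telescopes,
`(∫₀^τ exp (ηA) [A, B] exp (-ηA) dη) exp (τA) = [exp (τA), B]`, and the second-order condition
reads `[P₂, P₃] = [P₁, -(P₂ + P₃)]`. Hence `W τ exp (τP₂) exp (τP₃) = S' τ - 𝓛 S τ`.
-/

open NormedSpace

section

variable {𝔸 : Type*} [NormedRing 𝔸] [NormedAlgebra ℝ 𝔸] [CompleteSpace 𝔸]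

theorem exp_neg_mul_exp (x : 𝔸) : exp (-x) * exp x = 1 := by
  let : NormedAlgebra ℚ 𝔸 := NormedAlgebra.restrictScalars ℚ ℝ 𝔸
  rw [← exp_add_of_commute (Commute.neg_left (Commute.refl x)), neg_add_cancel, exp_zero]

theorem integral_exp_smul_mul_commutator_mul_exp_neg_smul (A B : 𝔸) (t : ℝ) :
    ∫ η in (0 : ℝ)..t, exp (η • A) * (A * B - B * A) * exp (-(η • A))
      = exp (t • A) * B * exp (-(t • A)) - B := by
  simp_rw [← smul_neg]
  have hderiv : ∀ η : ℝ, HasDerivAt (fun η : ℝ => exp (η • A) * B * exp (η • -A))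
      (exp (η • A) * (A * B - B * A) * exp (η • -A)) η := fun η =>
    (((hasDerivAt_exp_smul_const A η).mul_const B).mul
      (hasDerivAt_exp_smul_const' (-A) η)).congr_deriv (by noncomm_ring)
  have hexpA := (differentiable_exp_smul_const ℝ A).continuous
  have hexpA' := (differentiable_exp_smul_const ℝ (-A)).continuous
  rw [intervalIntegral.integral_eq_sub_of_hasDerivAt (fun η _ => hderiv η)
    (Continuous.intervalIntegrable (by fun_prop) 0 t)]
  simp

theorem integral_exp_smul_mul_commutator_mul_exp_neg_smul_mul_exp_smul (A B : 𝔸) (t : ℝ) :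
    (∫ η in (0 : ℝ)..t, exp (η • A) * (A * B - B * A) * exp (-(η • A))) * exp (t • A)
      = exp (t • A) * B - B * exp (t • A) := by
  rw [integral_exp_smul_mul_commutator_mul_exp_neg_smul, sub_mul, mul_assoc, exp_neg_mul_exp,
    mul_one]

theorem sub_exp_smul_mul_eq_integral_of_hasDerivAt {S S' : ℝ → 𝔸} (L : 𝔸)
    (hS : ∀ τ, HasDerivAt S (S' τ) τ) (hS' : Continuous S') (t : ℝ) :
    S t - exp (t • L) * S 0 = ∫ τ in (0 : ℝ)..t, exp ((t - τ) • L) * (S' τ - L * S τ) := by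
  have hexp : ∀ τ : ℝ, HasDerivAt (fun τ : ℝ => exp ((t - τ) • L)) (-(exp ((t - τ) • L) * L)) τ :=
    fun τ => ((hasDerivAt_exp_smul_const L (t - τ)).scomp τ
      ((hasDerivAt_id τ).const_sub t)).congr_deriv (by simp)
  have hderiv : ∀ τ : ℝ, HasDerivAt (fun τ : ℝ => exp ((t - τ) • L) * S τ)
      (exp ((t - τ) • L) * (S' τ - L * S τ)) τ := fun τ =>
    ((hexp τ).mul (hS τ)).congr_deriv (by noncomm_ring)
  have hSc : Continuous S := Differentiable.continuous fun τ => (hS τ).differentiableAt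
  have hexpc : Continuous fun τ : ℝ => exp ((t - τ) • L) :=
    Differentiable.continuous fun τ => (hexp τ).differentiableAt
  rw [intervalIntegral.integral_eq_sub_of_hasDerivAt (fun τ _ => hderiv τ)
    (Continuous.intervalIntegrable (by fun_prop) 0 t)]
  simp

end

/-- Under the second-order condition `[P₁,P₂] + [P₁,P₃] + [P₂,P₃] = 0`, with
`𝓛 = P₁ + P₂ + P₃`, `E(t) = exp(tP₁)exp(tP₂)exp(tP₃) − exp(t𝓛)` and
`W(τ) = exp(τP₁)·∫₀^τ exp(ηP₂)[P₂,P₃]exp(−ηP₂) dη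
       − (∫₀^τ exp(ηP₁)[P₂,P₃]exp(−ηP₁) dη)·exp(τP₁)`,
one has `E(t) = ∫₀ᵗ exp((t−τ)𝓛)·W(τ)·exp(τP₂)exp(τP₃) dτ` for all `t ≥ 0`. -/
theorem E_via_W {𝒜 : Type*} [NormedRing 𝒜] [NormedAlgebra ℂ 𝒜] [CompleteSpace 𝒜]
    (P₁ P₂ P₃ : 𝒜) (𝓛 : 𝒜) (h𝓛 : 𝓛 = P₁ + P₂ + P₃)
    (hcond : (P₁ * P₂ - P₂ * P₁) + (P₁ * P₃ - P₃ * P₁) + (P₂ * P₃ - P₃ * P₂) = 0)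
    (W : ℝ → 𝒜)
    (hW : ∀ τ : ℝ, W τ =
        exp ((τ : ℂ) • P₁)
            * (∫ η in (0 : ℝ)..τ, exp ((η : ℂ) • P₂) * (P₂ * P₃ - P₃ * P₂)
                * exp (-((η : ℂ) • P₂)))
          - (∫ η in (0 : ℝ)..τ, exp ((η : ℂ) • P₁) * (P₂ * P₃ - P₃ * P₂)
                * exp (-((η : ℂ) • P₁)))
              * exp ((τ : ℂ) • P₁)) :
    ∀ t : ℝ, 0 ≤ t →
      exp ((t : ℂ) • P₁) * exp ((t : ℂ) • P₂) * exp ((t : ℂ) • P₃) - exp ((t : ℂ) • 𝓛)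
        = ∫ τ in (0 : ℝ)..t, exp (((t - τ : ℝ) : ℂ) • 𝓛) * W τ
            * exp ((τ : ℂ) • P₂) * exp ((τ : ℂ) • P₃) := by
  intro t _
  simp only [Complex.coe_smul] at hW ⊢
  have hcomm : P₂ * P₃ - P₃ * P₂ = P₁ * -(P₂ + P₃) - -(P₂ + P₃) * P₁ := by
    rw [← sub_eq_zero, ← hcond]; noncomm_ring
  have hS : ∀ τ : ℝ, HasDerivAt (fun τ : ℝ => exp (τ • P₁) * exp (τ • P₂) * exp (τ • P₃)) _ τ :=
    fun τ => ((hasDerivAt_exp_smul_const' P₁ τ).fun_mul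
      (hasDerivAt_exp_smul_const' P₂ τ)).fun_mul (hasDerivAt_exp_smul_const' P₃ τ)
  have hexp (P : 𝒜) := (differentiable_exp_smul_const ℝ P).continuous
  have hduhamel := sub_exp_smul_mul_eq_integral_of_hasDerivAt 𝓛 hS (by fun_prop) t
  simp only [zero_smul, exp_zero, mul_one] at hduhamel
  rw [hduhamel]
  refine intervalIntegral.integral_congr fun τ _ => ?_
  have hI₁ := integral_exp_smul_mul_commutator_mul_exp_neg_smul_mul_exp_smul P₁ (-(P₂ + P₃)) τ
  have hI₂ := integral_exp_smul_mul_commutator_mul_exp_neg_smul_mul_exp_smul P₂ P₃ τ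
  rw [← hcomm] at hI₁
  rw [hW, h𝓛]
  calc _ = exp ((t - τ) • (P₁ + P₂ + P₃))
        * (exp (τ • P₁) * (exp (τ • P₂) * P₃ - P₃ * exp (τ • P₂)) * exp (τ • P₃)
          - (exp (τ • P₁) * -(P₂ + P₃) - -(P₂ + P₃) * exp (τ • P₁))
            * exp (τ • P₂) * exp (τ • P₃)) := by
        noncomm_ring
    _ = _ := by rw [← hI₁, ← hI₂]; noncomm_ring
end

section
/- Let P₁, P₂, P₃ be elements of a complex Banach algebra satisfying [P₁,P₂] + [P₁,P₃] + [P₂,P₃] = 0, set 𝓛 = P₁ + P₂ + P₃ and E(t) = exp(tP₁)·exp(tP₂)·exp(tP₃) − exp(t𝓛). Assume moreover that ‖exp(sP₁)‖ ≤ 1, ‖exp(sP₂)‖ ≤ 1, ‖exp(sP₃)‖ ≤ 1, ‖exp(s𝓛)‖ ≤ 1 and, for the conjugations appearing in the error formula, ‖exp(sP₁)·X·exp(−sP₁)‖ ≤ ‖X‖ and ‖exp(sP₂)·X·exp(−sP₂)‖ ≤ ‖X‖ for all s ≥ 0 and all X ∈ 𝒜 (as holds when all exponentials are isometries, e.g.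 unitary groups on a Hilbert space). Then for every t ≥ 0, ‖E(t)‖ ≤ (t³/6)·(‖[P₁,[P₂,P₃]]‖ + ‖[P₂,[P₂,P₃]]‖). -/
/-!
Write `U(s) = exp(sP₁) exp(sP₂) exp(sP₃)`. Then `U' = G U` with
`G(s) = P₁ + e^{sP₁} (P₂ + e^{sP₂} P₃ e^{-sP₂}) e^{-sP₁}`, and by variation of constants
`d/ds (exp((t-s)𝓛) U(s)) = exp((t-s)𝓛) (G(s) - 𝓛) U(s)`; contractivity then reduces the claim
to `‖G(s) - 𝓛‖ ≤ s²/2 (‖[P₁,[P₂,P₃]]‖ + ‖[P₂,[P₂,P₃]]‖)`. Expanding both conjugations to first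
order, the first-order terms `s[P₁, P₂ + P₃] + s[P₂, P₃]` cancel by the commutator condition, and
the Taylor remainders are controlled by the double commutators because the conjugations are
contractive.
-/

open NormedSpace Set

theorem norm_sub_le_of_norm_deriv_le_mul_pow {E : Type*} [NormedAddCommGroup E]
    [NormedSpace ℝ E] {f f' : ℝ → E} {C t : ℝ} (n : ℕ) (ht : 0 ≤ t)
    (hf : ∀ s, HasDerivAt f (f' s) s) (bound : ∀ s ∈ Ico 0 t, ‖f' s‖ ≤ C * s ^ n) :
    ‖f t - f 0‖ ≤ C * t ^ (n + 1) / (n + 1) := by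
  have hB (s : ℝ) : HasDerivAt (fun s => C * s ^ (n + 1) / (n + 1)) (C * s ^ n) s := by
    refine (((hasDerivAt_pow (n + 1) s).const_mul C).div_const ((n : ℝ) + 1)).congr_deriv ?_
    push_cast
    field_simp
  refine image_norm_le_of_norm_deriv_right_le_deriv_boundary (f := fun s => f s - f 0)
    (fun s _ => ((hf s).sub_const (f 0)).continuousAt.continuousWithinAt)
    (fun s _ => ((hf s).sub_const (f 0)).hasDerivWithinAt) (by simp) hB bound ⟨ht, le_rfl⟩

section Conjugation

variable {𝒜 : Type*} [NormedRing 𝒜] [NormedAlgebra ℂ 𝒜]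

noncomputable def expFlow (P : 𝒜) (s : ℝ) : 𝒜 := exp ((s : ℂ) • P)

noncomputable def expConj (P X : 𝒜) (s : ℝ) : 𝒜 := expFlow P s * X * exp (-((s : ℂ) • P))

theorem commute_expFlow (P : 𝒜) (s : ℝ) : Commute P (expFlow P s) :=
  ((Commute.refl P).smul_right _).exp_right

@[simp]
theorem expFlow_zero (P : 𝒜) : expFlow P 0 = 1 := by simp [expFlow]

@[simp]
theorem expConj_zero (P X : 𝒜) : expConj P X 0 = X := by simp [expConj]

theorem expConj_add (P X Y : 𝒜) (s : ℝ) :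
    expConj P (X + Y) s = expConj P X s + expConj P Y s := by
  simp only [expConj, mul_add, add_mul]

theorem expConj_neg (P X : 𝒜) (s : ℝ) : expConj P (-X) s = -expConj P X s := by
  simp only [expConj, mul_neg, neg_mul]

theorem expConj_smul (P X : 𝒜) (r s : ℝ) : expConj P (r • X) s = r • expConj P X s := by
  simp only [expConj, mul_smul_comm, smul_mul_assoc]

variable [CompleteSpace 𝒜]

theorem exp_neg_smul_mul_expFlow (P : 𝒜) (s : ℝ) : exp (-((s : ℂ) • P)) * expFlow P s = 1 := by
  have hball (x : 𝒜) : x ∈ Metric.eball 0 (expSeries ℂ 𝒜).radius :=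
    (expSeries_radius_eq_top ℂ 𝒜).symm ▸ edist_lt_top _ _
  rw [expFlow, ← exp_add_of_commute_of_mem_ball (Commute.refl _).neg_left (hball _) (hball _),
    neg_add_cancel, exp_zero]

theorem expConj_mul_expFlow (P X : 𝒜) (s : ℝ) :
    expConj P X s * expFlow P s = expFlow P s * X := by
  rw [expConj, mul_assoc, exp_neg_smul_mul_expFlow, mul_one]

theorem hasDerivAt_expFlow (P : 𝒜) (s : ℝ) : HasDerivAt (expFlow P) (P * expFlow P s) s := by
  show HasDerivAt (fun s : ℝ => exp ((s : ℂ) • P)) (P * exp ((s : ℂ) • P)) s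
  simpa [Function.comp_def] using
    (hasDerivAt_exp_smul_const' P (s : ℂ)).scomp s Complex.ofRealCLM.hasDerivAt

theorem HasDerivAt.expFlow_mul {u : ℝ → 𝒜} {X : 𝒜} {s : ℝ} (P : 𝒜)
    (hu : HasDerivAt u (X * u s) s) :
    HasDerivAt (fun s => expFlow P s * u s) ((P + expConj P X s) * (expFlow P s * u s)) s := by
  refine ((hasDerivAt_expFlow P s).mul hu).congr_deriv ?_
  rw [add_mul, ← mul_assoc (expConj P X s), expConj_mul_expFlow]
  noncomm_ring

theorem hasDerivAt_expConj (P X : 𝒜) (s : ℝ) :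
    HasDerivAt (expConj P X) (expConj P ⁅P, X⁆ s) s := by
  have hinv : HasDerivAt (fun s : ℝ => exp (-((s : ℂ) • P))) (exp (-((s : ℂ) • P)) * -P) s := by
    simpa [Function.comp_def] using
      (hasDerivAt_exp_smul_const (-P) (s : ℂ)).scomp s Complex.ofRealCLM.hasDerivAt
  refine (((hasDerivAt_expFlow P s).mul_const X).mul hinv).congr_deriv ?_
  have hcomm : Commute P (exp (-((s : ℂ) • P))) :=
    ((Commute.refl P).smul_right _).neg_right.exp_right
  rw [expConj, Ring.lie_def, (commute_expFlow P s).eq, mul_neg, ← hcomm.eq]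
  noncomm_ring

variable {P : 𝒜}

theorem norm_expConj_sub_le 
    (hP : ∀ s : ℝ, 0 ≤ s → ∀ X : 𝒜, ‖expConj P X s‖ ≤ ‖X‖) (X : 𝒜) {s : ℝ} (hs : 0 ≤ s) :
    ‖expConj P X s - X‖ ≤ s * ‖⁅P, X⁆‖ := by
  simpa [mul_comm] using
    norm_sub_le_of_norm_deriv_le_mul_pow 0 hs (hasDerivAt_expConj P X) (C := ‖⁅P, X⁆‖)
      (fun τ hτ => by simpa using hP τ hτ.1 _)

theorem norm_expConj_sub_sub_smul_le 
    (hP : ∀ s : ℝ, 0 ≤ s → ∀ X : 𝒜, ‖expConj P X s‖ ≤ ‖X‖) (X : 𝒜) {s : ℝ} (hs : 0 ≤ s) :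
    ‖expConj P X s - X - s • ⁅P, X⁆‖ ≤ s ^ 2 / 2 * ‖⁅P, ⁅P, X⁆⁆‖ := by
  have hf (τ : ℝ) : HasDerivAt (fun τ => expConj P X τ - X - τ • ⁅P, X⁆)
      (expConj P ⁅P, X⁆ τ - ⁅P, X⁆) τ :=
    (((hasDerivAt_expConj P X τ).sub_const X).sub
      ((hasDerivAt_id τ).smul_const ⁅P, X⁆)).congr_deriv (by simp)
  have := norm_sub_le_of_norm_deriv_le_mul_pow 1 hs hf
    (fun τ hτ => (norm_expConj_sub_le hP _ hτ.1).trans_eq (by ring))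
  simp only [expConj_zero, sub_self, zero_smul, sub_zero] at this
  refine this.trans_eq ?_
  push_cast
  ring

theorem norm_expConj_sub_sub_smul_expConj_le 
    (hP : ∀ s : ℝ, 0 ≤ s → ∀ X : 𝒜, ‖expConj P X s‖ ≤ ‖X‖) (X : 𝒜) {s : ℝ} (hs : 0 ≤ s) :
    ‖expConj P X s - X - s • expConj P ⁅P, X⁆ s‖ ≤ s ^ 2 / 2 * ‖⁅P, ⁅P, X⁆⁆‖ := by
  have hf (τ : ℝ) : HasDerivAt (fun τ => expConj P X τ - X - τ • expConj P ⁅P, X⁆ τ)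
      (-(τ • expConj P ⁅P, ⁅P, X⁆⁆ τ)) τ := by
    refine (((hasDerivAt_expConj P X τ).sub_const X).sub
      ((hasDerivAt_id τ).smul (hasDerivAt_expConj P ⁅P, X⁆ τ))).congr_deriv ?_
    simp
  have := norm_sub_le_of_norm_deriv_le_mul_pow 1 hs hf (C := ‖⁅P, ⁅P, X⁆⁆‖) fun τ hτ => by
    rw [norm_neg, norm_smul, Real.norm_of_nonneg hτ.1, mul_comm, pow_one]
    exact mul_le_mul_of_nonneg_right (hP τ hτ.1 _) hτ.1
  simp only [expConj_zero, sub_self, zero_smul, sub_zero] at this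
  refine this.trans_eq ?_
  push_cast
  ring

end Conjugation

section Splitting

variable {𝒜 : Type*} [NormedRing 𝒜] [NormedAlgebra ℂ 𝒜] [CompleteSpace 𝒜]

theorem norm_sub_expFlow_mul_le {L : 𝒜} (hL : ∀ s : ℝ, 0 ≤ s → ‖expFlow L s‖ ≤ 1)
    {u G : ℝ → 𝒜} {C t : ℝ} (n : ℕ) (ht : 0 ≤ t) (hu : ∀ s, HasDerivAt u (G s * u s) s)
    (hu_le : ∀ s ∈ Ico 0 t, ‖u s‖ ≤ 1) (hG : ∀ s ∈ Ico 0 t, ‖G s - L‖ ≤ C * s ^ n) :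
    ‖u t - expFlow L t * u 0‖ ≤ C * t ^ (n + 1) / (n + 1) := by
  have hg (s : ℝ) : HasDerivAt (fun s => expFlow L (t - s) * u s)
      (expFlow L (t - s) * ((G s - L) * u s)) s := by
    have hflow : HasDerivAt (fun s => expFlow L (t - s)) (-(L * expFlow L (t - s))) s :=
      ((hasDerivAt_expFlow L (t - s)).scomp s ((hasDerivAt_id s).const_sub t)).congr_deriv
        (by simp)
    refine (hflow.mul (hu s)).congr_deriv ?_
    rw [(commute_expFlow L (t - s)).eq]
    noncomm_ring
  have := norm_sub_le_of_norm_deriv_le_mul_pow n ht hg fun s hs => by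
    calc ‖expFlow L (t - s) * ((G s - L) * u s)‖
        ≤ ‖expFlow L (t - s)‖ * (‖G s - L‖ * ‖u s‖) :=
          (norm_mul_le _ _).trans (by gcongr; exact norm_mul_le _ _)
      _ ≤ 1 * (‖G s - L‖ * 1) := by
          gcongr
          exacts [hL _ (by linarith [hs.2]), hu_le s hs]
      _ ≤ C * s ^ n := by simpa using hG s hs
  simpa using this

theorem hasDerivAt_expFlow_mul_expFlow_mul_expFlow (P₁ P₂ P₃ : 𝒜) (s : ℝ) :
    HasDerivAt (fun s => expFlow P₁ s * expFlow P₂ s * expFlow P₃ s)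
      ((P₁ + expConj P₁ (P₂ + expConj P₂ P₃ s) s) *
        (expFlow P₁ s * expFlow P₂ s * expFlow P₃ s)) s := by
  simp only [mul_assoc]
  exact ((hasDerivAt_expFlow P₃ s).expFlow_mul P₂).expFlow_mul P₁

theorem norm_expConj_add_expConj_sub_le {P₁ P₂ P₃ : 𝒜}
    (hcond : ⁅P₁, P₂⁆ + ⁅P₁, P₃⁆ + ⁅P₂, P₃⁆ = 0)
    (hP₁ : ∀ s : ℝ, 0 ≤ s → ∀ X : 𝒜, ‖expConj P₁ X s‖ ≤ ‖X‖)
    (hP₂ : ∀ s : ℝ, 0 ≤ s → ∀ X : 𝒜, ‖expConj P₂ X s‖ ≤ ‖X‖) {s : ℝ} (hs : 0 ≤ s) :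
    ‖expConj P₁ (P₂ + expConj P₂ P₃ s) s - (P₂ + P₃)‖
      ≤ s ^ 2 / 2 * (‖⁅P₁, ⁅P₂, P₃⁆⁆‖ + ‖⁅P₂, ⁅P₂, P₃⁆⁆‖) := by
  have hY : ⁅P₁, P₂ + P₃⁆ = -⁅P₂, P₃⁆ := by
    refine eq_neg_of_add_eq_zero_left (Eq.trans ?_ hcond)
    simp only [Ring.lie_def]
    noncomm_ring
  have hneg : ⁅P₁, -⁅P₂, P₃⁆⁆ = -⁅P₁, ⁅P₂, P₃⁆⁆ := by
    simp only [Ring.lie_def]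
    noncomm_ring
  have h₁ := norm_expConj_sub_sub_smul_expConj_le hP₁ (P₂ + P₃) hs
  rw [hY, hneg, norm_neg, expConj_neg, smul_neg, sub_neg_eq_add] at h₁
  have h₂ := norm_expConj_sub_sub_smul_le hP₂ P₃ hs
  have hsplit : P₂ + expConj P₂ P₃ s
      = P₂ + P₃ + s • ⁅P₂, P₃⁆ + (expConj P₂ P₃ s - P₃ - s • ⁅P₂, P₃⁆) := by abel
  calc ‖expConj P₁ (P₂ + expConj P₂ P₃ s) s - (P₂ + P₃)‖
      = ‖expConj P₁ (P₂ + P₃) s - (P₂ + P₃) + s • expConj P₁ ⁅P₂, P₃⁆ s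
          + expConj P₁ (expConj P₂ P₃ s - P₃ - s • ⁅P₂, P₃⁆) s‖ := by
        rw [hsplit, expConj_add, expConj_add, expConj_smul]
        abel_nf
    _ ≤ s ^ 2 / 2 * ‖⁅P₁, ⁅P₂, P₃⁆⁆‖ + s ^ 2 / 2 * ‖⁅P₂, ⁅P₂, P₃⁆⁆‖ :=
        (norm_add_le _ _).trans (add_le_add h₁ ((hP₁ s hs _).trans h₂))
    _ = s ^ 2 / 2 * (‖⁅P₁, ⁅P₂, P₃⁆⁆‖ + ‖⁅P₂, ⁅P₂, P₃⁆⁆‖) := by ring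

end Splitting

/-- error bound \R{eq:3.5}: under the second-order condition and the
contractivity assumptions `‖exp(sPℓ)‖ ≤ 1`, `‖exp(s𝓛)‖ ≤ 1` and
`‖exp(sPℓ)·X·exp(−sPℓ)‖ ≤ ‖X‖` (`ℓ = 1, 2`) for all `s ≥ 0`, the splitting error satisfies
`‖E(t)‖ ≤ (t³/6)(‖[P₁,[P₂,P₃]]‖ + ‖[P₂,[P₂,P₃]]‖)` for all `t ≥ 0`. -/
theorem splitting_error_bound {𝒜 : Type*} [NormedRing 𝒜] [NormedAlgebra ℂ 𝒜]
    [CompleteSpace 𝒜] (P₁ P₂ P₃ : 𝒜) (𝓛 : 𝒜) (h𝓛 : 𝓛 = P₁ + P₂ + P₃)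
    (hcond : (P₁ * P₂ - P₂ * P₁) + (P₁ * P₃ - P₃ * P₁) + (P₂ * P₃ - P₃ * P₂) = 0)
    (h1 : ∀ s : ℝ, 0 ≤ s → ‖exp ((s : ℂ) • P₁)‖ ≤ 1)
    (h2 : ∀ s : ℝ, 0 ≤ s → ‖exp ((s : ℂ) • P₂)‖ ≤ 1)
    (h3 : ∀ s : ℝ, 0 ≤ s → ‖exp ((s : ℂ) • P₃)‖ ≤ 1)
    (hL : ∀ s : ℝ, 0 ≤ s → ‖exp ((s : ℂ) • 𝓛)‖ ≤ 1)
    (hconj1 : ∀ s : ℝ, 0 ≤ s → ∀ X : 𝒜,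
      ‖exp ((s : ℂ) • P₁) * X * exp (-((s : ℂ) • P₁))‖ ≤ ‖X‖)
    (hconj2 : ∀ s : ℝ, 0 ≤ s → ∀ X : 𝒜,
      ‖exp ((s : ℂ) • P₂) * X * exp (-((s : ℂ) • P₂))‖ ≤ ‖X‖) :
    ∀ t : ℝ, 0 ≤ t →
      ‖exp ((t : ℂ) • P₁) * exp ((t : ℂ) • P₂) * exp ((t : ℂ) • P₃)
          - exp ((t : ℂ) • 𝓛)‖
        ≤ t ^ 3 / 6 * (‖P₁ * (P₂ * P₃ - P₃ * P₂) - (P₂ * P₃ - P₃ * P₂) * P₁‖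
            + ‖P₂ * (P₂ * P₃ - P₃ * P₂) - (P₂ * P₃ - P₃ * P₂) * P₂‖) := by
  intro t ht
  subst h𝓛
  have hG (s : ℝ) (hs : s ∈ Ico 0 t) :
      ‖P₁ + expConj P₁ (P₂ + expConj P₂ P₃ s) s - (P₁ + P₂ + P₃)‖
        ≤ (‖⁅P₁, ⁅P₂, P₃⁆⁆‖ + ‖⁅P₂, ⁅P₂, P₃⁆⁆‖) / 2 * s ^ 2 := by
    rw [show P₁ + expConj P₁ (P₂ + expConj P₂ P₃ s) s - (P₁ + P₂ + P₃)
        = expConj P₁ (P₂ + expConj P₂ P₃ s) s - (P₂ + P₃) by abel]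
    exact (norm_expConj_add_expConj_sub_le hcond hconj1 hconj2 hs.1).trans_eq (by ring)
  have hu_le (s : ℝ) (hs : s ∈ Ico 0 t) :
      ‖expFlow P₁ s * expFlow P₂ s * expFlow P₃ s‖ ≤ 1 :=
    norm_mul₃_le.trans <| mul_le_one₀ (mul_le_one₀ (h1 s hs.1) (norm_nonneg _) (h2 s hs.1))
      (norm_nonneg _) (h3 s hs.1)
  have := norm_sub_expFlow_mul_le hL 2 ht (hasDerivAt_expFlow_mul_expFlow_mul_expFlow P₁ P₂ P₃)
    hu_le hG
  simp only [expFlow_zero, mul_one, Ring.lie_def] at this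
  exact this.trans_eq (by push_cast; ring)
end

section
/- Let α > 0 be a real number that is not an integer, and let s be a positive integer. Define u : (0,∞) → ℝ by u(x) = exp(−x^α). Then all derivatives u, u′, …, u^(s) are square-integrable on (0,∞) (i.e. u belongs to the Sobolev space H^s(0,∞)) if and only if α > s − 1/2. -/
/-!
On `(0, ∞)` the `(n + 1)`-st derivative of `u x = exp (-x ^ α)` has the form
`x ^ (α - (n + 1)) * Qₙ(x ^ α) * exp (-x ^ α)` for a polynomial `Qₙ` with
`Qₙ(0) = -α (α - 1) ⋯ (α - n)`, which is nonzero because `α` is not an integer. Expanding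
`Qₙ`, the derivative is a combination of terms `x ^ p * exp (-x ^ α)` with `p ≥ α - (n + 1)`,
each of which is square-integrable at infinity, and at `0` exactly when `p > -1/2`. Near `0` the
derivative is comparable to `Qₙ(0) * x ^ (α - (n + 1))`, so it lies in `L²` iff
`α - (n + 1) > -1/2`; this condition is monotone in `n`, so only the top derivative matters.
-/

open MeasureTheory Real Set Filter Topology Polynomial

lemma memLp_two_rpow_mul_exp_neg_rpow {α q : ℝ} (hα : 0 < α) (hq : -(1 / 2) < q) :
    MemLp (fun x : ℝ => x ^ q * exp (-x ^ α)) 2 (volume.restrict (Ioi 0)) := by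
  have hmeas : AEStronglyMeasurable (fun x : ℝ => x ^ q * exp (-x ^ α))
      (volume.restrict (Ioi 0)) := by fun_prop
  rw [memLp_two_iff_integrable_sq hmeas]
  refine (integrableOn_rpow_mul_exp_neg_mul_rpow (s := 2 * q) (by linarith) hα two_pos
    ).congr_fun (fun x hx => ?_) measurableSet_Ioi
  rw [mul_pow, ← rpow_natCast, ← rpow_mul (le_of_lt hx), ← exp_nat_mul]
  push_cast
  ring_nf

lemma neg_half_lt_of_memLp_two_rpow {q δ : ℝ} (hδ : 0 < δ)
    (h : MemLp (fun x : ℝ => x ^ q) 2 (volume.restrict (Ioo 0 δ))) : -(1 / 2) < q := by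
  have hsq : IntegrableOn (fun x : ℝ => (x ^ q) ^ 2) (Ioo 0 δ) :=
    (memLp_two_iff_integrable_sq h.1).mp h
  have : IntegrableOn (fun x : ℝ => x ^ (2 * q)) (Ioo 0 δ) :=
    hsq.congr_fun (fun x hx => by rw [mul_comm, rpow_mul hx.1.le, rpow_two]) measurableSet_Ioo
  rw [intervalIntegral.integrableOn_Ioo_rpow_iff hδ] at this
  linarith

lemma neg_half_lt_of_memLp_two_rpow_mul {q c : ℝ} {h : ℝ → ℝ} (hc : c ≠ 0)
    (hh : Tendsto h (𝓝[>] 0) (𝓝 c))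
    (hm : MemLp (fun x : ℝ => x ^ q * h x) 2 (volume.restrict (Ioi 0))) : -(1 / 2) < q := by
  have hc' : 0 < |c| := abs_pos.2 hc
  obtain ⟨δ, hδ, hbound⟩ : ∃ δ > 0, Ioo 0 δ ⊆ {x | |c| / 2 < |h x|} :=
    mem_nhdsGT_iff_exists_Ioo_subset.mp
      (((continuous_abs.tendsto c).comp hh).eventually (lt_mem_nhds (half_lt_self hc')))
  refine neg_half_lt_of_memLp_two_rpow hδ <|
    ((hm.mono_measure (Measure.restrict_mono Ioo_subset_Ioi_self le_rfl)).const_mul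
      (2 / |c|)).of_le (by fun_prop) (ae_restrict_of_forall_mem measurableSet_Ioo fun x hx => ?_)
  have hhx : |c| / 2 ≤ |h x| := (hbound hx).le
  calc ‖x ^ q‖ = 2 / |c| * (|x ^ q| * (|c| / 2)) := by
        rw [norm_eq_abs]; field_simp
    _ ≤ 2 / |c| * (|x ^ q| * |h x|) := by gcongr
    _ = ‖2 / |c| * (x ^ q * h x)‖ := by
        simp only [norm_mul, norm_div, norm_eq_abs, abs_abs, abs_two]

lemma hasDerivAt_rpow_mul_eval_rpow_mul_exp_neg_rpow (α q : ℝ) (P : ℝ[X]) {x : ℝ}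
    (hx : 0 < x) :
    HasDerivAt (fun y => y ^ q * P.eval (y ^ α) * exp (-y ^ α))
      (x ^ (q - 1) * (C q * P + C α * X * (derivative P - P)).eval (x ^ α) * exp (-x ^ α))
      x := by
  have hq := hasDerivAt_rpow_const (p := q) (Or.inl hx.ne')
  have hα := hasDerivAt_rpow_const (p := α) (Or.inl hx.ne')
  have hP : HasDerivAt (fun y => P.eval (y ^ α))
      ((derivative P).eval (x ^ α) * (α * x ^ (α - 1))) x :=
    (P.hasDerivAt _).comp x hα
  refine ((hq.fun_mul hP).fun_mul hα.fun_neg.exp).congr_deriv ?_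
  simp only [eval_add, eval_mul, eval_C, eval_X, eval_sub, rpow_sub_one hx.ne']
  field_simp
  ring

noncomputable def expNegRpowDerivPoly (α : ℝ) : ℕ → ℝ[X]
  | 0 => C (-α)
  | n + 1 => C (α - (n + 1)) * expNegRpowDerivPoly α n
      + C α * X * (derivative (expNegRpowDerivPoly α n) - expNegRpowDerivPoly α n)

lemma eqOn_iteratedDerivWithin_exp_neg_rpow (α : ℝ) (n : ℕ) :
    EqOn (iteratedDerivWithin (n + 1) (fun x => exp (-x ^ α)) (Ioi 0))
      (fun x => x ^ (α - (n + 1)) * (expNegRpowDerivPoly α n).eval (x ^ α) * exp (-x ^ α))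
      (Ioi 0) := by
  induction n with
  | zero =>
    intro x hx
    rw [zero_add, iteratedDerivWithin_one, derivWithin_of_isOpen isOpen_Ioi hx,
      (hasDerivAt_rpow_const (p := α) (Or.inl (ne_of_gt hx))).fun_neg.exp.deriv]
    simp only [expNegRpowDerivPoly, eval_C, CharP.cast_eq_zero, zero_add]
    ring
  | succ n ih =>
    intro x hx
    rw [iteratedDerivWithin_succ, derivWithin_congr ih (ih hx),
      derivWithin_of_isOpen isOpen_Ioi hx,
      (hasDerivAt_rpow_mul_eval_rpow_mul_exp_neg_rpow α _ _ hx).deriv, expNegRpowDerivPoly]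
    push_cast
    ring_nf

lemma eval_zero_expNegRpowDerivPoly_ne_zero {α : ℝ} (hα : ∀ n : ℤ, α ≠ n) (n : ℕ) :
    (expNegRpowDerivPoly α n).eval 0 ≠ 0 := by
  induction n with
  | zero => simpa [expNegRpowDerivPoly] using hα 0
  | succ n ih =>
    have hαn : α - (n + 1) ≠ 0 := sub_ne_zero.2 (by exact_mod_cast hα (n + 1))
    simpa [expNegRpowDerivPoly] using mul_ne_zero hαn ih

lemma memLp_two_rpow_mul_eval_rpow_mul_exp_neg_rpow {α q : ℝ} (hα : 0 < α) (hq : -(1 / 2) < q)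
    (P : ℝ[X]) :
    MemLp (fun x => x ^ q * P.eval (x ^ α) * exp (-x ^ α)) 2 (volume.restrict (Ioi 0)) := by
  have hexpand : EqOn (fun x => x ^ q * P.eval (x ^ α) * exp (-x ^ α))
      (fun x => ∑ i ∈ Finset.range (P.natDegree + 1),
        P.coeff i * (x ^ (q + α * i) * exp (-x ^ α))) (Ioi 0) := by
    intro x hx
    simp only [eval_eq_sum_range, Finset.mul_sum, Finset.sum_mul, rpow_add hx,
      rpow_mul_natCast hx.le]
    refine Finset.sum_congr rfl fun i _ => by ring
  refine (memLp_congr_ae (hexpand.aeEq_restrict measurableSet_Ioi)).2 <|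
    memLp_finsetSum _ fun i _ => (memLp_two_rpow_mul_exp_neg_rpow hα ?_).const_mul _
  have : 0 ≤ α * i := by positivity
  linarith

lemma memLp_two_rpow_mul_eval_rpow_mul_exp_neg_rpow_iff {α q : ℝ} (hα : 0 < α) {P : ℝ[X]}
    (hP : P.eval 0 ≠ 0) :
    MemLp (fun x => x ^ q * P.eval (x ^ α) * exp (-x ^ α)) 2 (volume.restrict (Ioi 0)) ↔
      -(1 / 2) < q := by
  refine ⟨fun hm => ?_, fun hq => memLp_two_rpow_mul_eval_rpow_mul_exp_neg_rpow hα hq P⟩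
  have hcont : ContinuousAt (fun x => P.eval (x ^ α) * exp (-x ^ α)) 0 := by
    have := continuousAt_rpow_const 0 α (Or.inr hα.le)
    fun_prop
  refine neg_half_lt_of_memLp_two_rpow_mul (c := P.eval 0) hP ?_
    (by simpa only [mul_assoc] using hm)
  simpa [zero_rpow hα.ne'] using hcont.tendsto.mono_left nhdsWithin_le_nhds

theorem sobolev_membership_exp_neg_rpow_general (α : ℝ) (hα : 0 < α) (hnotint : ∀ n : ℤ, α ≠ n)
    (s : ℕ) :
    (∀ n : ℕ, n ≤ s →
        MemLp (iteratedDerivWithin n (fun x : ℝ => Real.exp (-(x ^ α))) (Set.Ioi (0 : ℝ))) 2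
          (volume.restrict (Set.Ioi (0 : ℝ))))
      ↔ α > (s : ℝ) - 1 / 2 := by
  have hmem_succ (n : ℕ) :
      MemLp (iteratedDerivWithin (n + 1) (fun x : ℝ => exp (-x ^ α)) (Ioi 0)) 2
        (volume.restrict (Ioi 0)) ↔ (n + 1 : ℝ) - 1 / 2 < α := by
    rw [memLp_congr_ae ((eqOn_iteratedDerivWithin_exp_neg_rpow α n).aeEq_restrict
      measurableSet_Ioi), memLp_two_rpow_mul_eval_rpow_mul_exp_neg_rpow_iff hα
      (eval_zero_expNegRpowDerivPoly_ne_zero hnotint n)]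
    constructor <;> intro h <;> linarith
  constructor
  · intro hmem
    cases s with
    | zero => simp only [CharP.cast_eq_zero]; linarith
    | succ m => exact_mod_cast (hmem_succ m).1 (hmem _ le_rfl)
  · intro hs n hn
    cases n with
    | zero =>
      simpa using memLp_two_rpow_mul_exp_neg_rpow (q := 0) hα (by norm_num)
    | succ m =>
      refine (hmem_succ m).2 ?_
      have : ((m + 1 : ℕ) : ℝ) ≤ s := by exact_mod_cast hn
      push_cast at this
      linarith

/-- For real non-integer `α > 0` and a positive integer `s`, the function
`u(x) = exp(−x^α)` on `(0,∞)` belongs to `H^s(0,∞)` — i.e. `u` and its derivatives within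
`(0,∞)` up to order `s` are all in `L²((0,∞))` — if and only if `α > s − 1/2`. -/
theorem sobolev_membership_exp_neg_rpow (α : ℝ) (hα : 0 < α) (hnotint : ∀ n : ℤ, α ≠ n)
    (s : ℕ) (hs : 0 < s) :
    (∀ n : ℕ, n ≤ s →
        MemLp (iteratedDerivWithin n (fun x : ℝ => Real.exp (-(x ^ α))) (Set.Ioi (0 : ℝ))) 2
          (volume.restrict (Set.Ioi (0 : ℝ))))
      ↔ α > (s : ℝ) - 1 / 2 :=
  sobolev_membership_exp_neg_rpow_general α hα hnotint s
end
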